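/- arXiv:2502.14852 — 5 statements merged into one kernel-verified Lean document; each statement's English description precedes it below -/
import Mathlib

section
/- Let D be an additive category equipped with a shift functor indexed by the integers, and let S : D ≌ D be an additive auto-equivalence commuting with the shift. Let X and Y be objects and m, n, p, q integers such that S^n(X) ≅ X[m] and S^q(Y) ≅ Y[p], and assume Δ := np − mq ≠ 0. Assume moreover that either there exists i₀ ∈ ℤ with Hom(X, Y[i]) = 0 for all i ≤ i₀, or there exists i₀ ∈ ℤ with Hom(X, Y[i]) = 0 for all i ≥ i₀. Then Hom(X, Y[i]) = 0 for every integer i; in particular Hom(X, Y) = 0. -/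
/-!
The pairs `(m, n)` for which `X` is `(m, n)`-Calabi–Yau form a subgroup of `ℤ × ℤ`, so `X` is
`(qm, qn)`- and `Y` is `(np, nq)`-Calabi–Yau. The fully faithful functor `S^{nq}`, which commutes
with the shift, then identifies `Hom(X, Y⟦i⟧)` with `Hom(X⟦qm⟧, Y⟦i + np⟧) ≃ Hom(X, Y⟦i + Δ⟧)`.
Vanishing of `Hom(X, Y⟦i⟧)` is therefore `Δ`-periodic in `i`, and a periodic property with
nonzero period that holds on a half-line holds everywhere.
-/

open CategoryTheory

/-- Iterated composition of an endofunctor: `iterFun F n = F ∘ F ∘ ⋯ ∘ F` (`n` times). -/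
def iterFun {D : Type*} [Category D] (F : D ⥤ D) : ℕ → (D ⥤ D)
  | 0 => Functor.id D
  | n + 1 => iterFun F n ⋙ F

/-- The `k`-th power (`k : ℤ`) of an auto-equivalence `S : D ≌ D`, as an endofunctor:
for `k ≥ 0` it is the `k`-fold composite of `S.functor`, for `k < 0` the `(-k)`-fold
composite of the quasi-inverse `S.inverse`. -/
def zpowFun {D : Type*} [Category D] (S : D ≌ D) : ℤ → (D ⥤ D)
  | Int.ofNat k => iterFun S.functor k
  | Int.negSucc k => iterFun S.inverse (k + 1)

namespace Function.Periodic

variable {P : ℤ → Prop} {Δ : ℤ}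

theorem forall_of_forall_le (hP : Periodic P Δ) (hΔ : Δ ≠ 0) {i₀ : ℤ}
    (h : ∀ i ≤ i₀, P i) (i : ℤ) : P i := by
  have hΔsq : 1 ≤ Δ * Δ := by nlinarith [Int.one_le_abs hΔ, abs_mul_abs_self Δ]
  rw [← hP.int_mul (-|i - i₀| * Δ) i, Int.cast_id]
  exact h _ (by
    nlinarith [le_abs_self (i - i₀), mul_nonneg (abs_nonneg (i - i₀)) (sub_nonneg.2 hΔsq)])

theorem forall_of_forall_ge (hP : Periodic P Δ) (hΔ : Δ ≠ 0) {i₀ : ℤ}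
    (h : ∀ i ≥ i₀, P i) (i : ℤ) : P i := by
  have hΔsq : 1 ≤ Δ * Δ := by nlinarith [Int.one_le_abs hΔ, abs_mul_abs_self Δ]
  rw [← hP.int_mul (|i - i₀| * Δ) i, Int.cast_id]
  exact h _ (by
    nlinarith [neg_abs_le (i - i₀), mul_nonneg (abs_nonneg (i - i₀)) (sub_nonneg.2 hΔsq)])

end Function.Periodic

section

variable {D : Type*} [Category D]

instance iterFun_isEquivalence (F : D ⥤ D) [F.IsEquivalence] :
    ∀ k, (iterFun F k).IsEquivalence
  | 0 => inferInstanceAs (𝟭 D).IsEquivalence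
  | k + 1 =>
    have := iterFun_isEquivalence F k
    inferInstanceAs (iterFun F k ⋙ F).IsEquivalence

instance zpowFun_isEquivalence (S : D ≌ D) : ∀ a, (zpowFun S a).IsEquivalence
  | Int.ofNat k => iterFun_isEquivalence S.functor k
  | Int.negSucc k => iterFun_isEquivalence S.inverse (k + 1)

def zpowFunSuccIso (S : D ≌ D) : ∀ a, zpowFun S (a + 1) ≅ zpowFun S a ⋙ S.functor
  | Int.ofNat _ => Iso.refl _
  | Int.negSucc 0 => S.counitIso.symm
  | Int.negSucc (k + 1) =>
    (Functor.rightUnitor _).symm ≪≫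
      Functor.isoWhiskerLeft (iterFun S.inverse (k + 1)) S.counitIso.symm ≪≫
      (Functor.associator _ _ _).symm

def zpowFunPredIso (S : D ≌ D) (a : ℤ) : zpowFun S (a - 1) ≅ zpowFun S a ⋙ S.inverse :=
  (Functor.rightUnitor _).symm ≪≫ Functor.isoWhiskerLeft _ S.unitIso ≪≫
    (Functor.associator _ _ _).symm ≪≫
    Functor.isoWhiskerRight (zpowFunSuccIso S (a - 1)).symm _ ≪≫
    eqToIso (by rw [sub_add_cancel])

theorem nonempty_zpowFun_add_iso (S : D ≌ D) (a b : ℤ) :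
    Nonempty (zpowFun S (a + b) ≅ zpowFun S b ⋙ zpowFun S a) := by
  induction a using Int.induction_on with
  | zero => exact ⟨eqToIso (by rw [zero_add]) ≪≫ (Functor.rightUnitor _).symm⟩
  | succ a ih =>
    obtain ⟨e⟩ := ih
    exact ⟨eqToIso (by rw [add_right_comm]) ≪≫ zpowFunSuccIso S _ ≪≫
      Functor.isoWhiskerRight e _ ≪≫ Functor.associator _ _ _ ≪≫
      Functor.isoWhiskerLeft _ (zpowFunSuccIso S _).symm⟩
  | pred a ih =>
    obtain ⟨e⟩ := ih
    exact ⟨eqToIso (by rw [sub_add_eq_add_sub]) ≪≫ zpowFunPredIso S _ ≪≫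
      Functor.isoWhiskerRight e _ ≪≫ Functor.associator _ _ _ ≪≫
      Functor.isoWhiskerLeft _ (zpowFunPredIso S _).symm⟩

variable [HasShift D ℤ]

instance iterFun_commShift (F : D ⥤ D) [F.CommShift ℤ] : ∀ k, (iterFun F k).CommShift ℤ
  | 0 => inferInstanceAs ((𝟭 D).CommShift ℤ)
  | k + 1 =>
    have := iterFun_commShift F k
    inferInstanceAs ((iterFun F k ⋙ F).CommShift ℤ)

noncomputable instance zpowFun_commShift (S : D ≌ D) [S.functor.CommShift ℤ] :
    ∀ a, (zpowFun S a).CommShift ℤ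
  | Int.ofNat k => iterFun_commShift S.functor k
  | Int.negSucc k =>
    have := S.commShiftInverse ℤ
    iterFun_commShift S.inverse (k + 1)

variable (S : D ≌ D) [S.functor.CommShift ℤ]

def calabiYauLattice (X : D) : AddSubgroup (ℤ × ℤ) where
  carrier := {mn | Nonempty ((zpowFun S mn.2).obj X ≅ X⟦mn.1⟧)}
  zero_mem' := ⟨((shiftFunctorZero D ℤ).app X).symm⟩
  add_mem' := by
    rintro ⟨c, a⟩ ⟨d, b⟩ ⟨eac⟩ ⟨ebd⟩
    obtain ⟨e⟩ := nonempty_zpowFun_add_iso S a b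
    exact ⟨e.app X ≪≫ (zpowFun S a).mapIso ebd ≪≫ ((zpowFun S a).commShiftIso d).app X ≪≫
      (shiftFunctor D d).mapIso eac ≪≫ ((shiftFunctorAdd D c d).app X).symm⟩
  neg_mem' := by
    rintro ⟨c, a⟩ ⟨eac⟩
    obtain ⟨e⟩ := nonempty_zpowFun_add_iso S (-a) a
    have e' : X ≅ ((zpowFun S (-a)).obj X)⟦c⟧ :=
      eqToIso (by rw [neg_add_cancel]; rfl) ≪≫ e.app X ≪≫ (zpowFun S (-a)).mapIso eac ≪≫
        ((zpowFun S (-a)).commShiftIso c).app X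
    exact ⟨((shiftFunctorCompIsoId D c (-c) (add_neg_cancel c)).app _).symm ≪≫
      (shiftFunctor D (-c)).mapIso e'.symm⟩

theorem mem_calabiYauLattice {X : D} {m n : ℤ} :
    (m, n) ∈ calabiYauLattice S X ↔ Nonempty ((zpowFun S n).obj X ≅ X⟦m⟧) :=
  Iff.rfl

noncomputable def homShiftEquiv {a c d : ℤ} {X Y : D} (eX : (zpowFun S a).obj X ≅ X⟦c⟧)
    (eY : (zpowFun S a).obj Y ≅ Y⟦d⟧) (i : ℤ) : (X ⟶ Y⟦i⟧) ≃ (X ⟶ Y⟦i + (d - c)⟧) :=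
  (Functor.FullyFaithful.ofFullyFaithful (zpowFun S a)).homEquiv.trans <|
    (eX.homCongr (((zpowFun S a).commShiftIso i).app Y ≪≫ (shiftFunctor D i).mapIso eY ≪≫
      ((shiftFunctorAdd' D d i _ rfl).app Y).symm ≪≫
      (shiftFunctorAdd' D (i + (d - c)) c (d + i) (by ring)).app Y)).trans
    (Functor.FullyFaithful.ofFullyFaithful (shiftFunctor D c)).homEquiv.symm

theorem periodic_subsingleton_hom_shift {a c d : ℤ} {X Y : D}
    (hX : (c, a) ∈ calabiYauLattice S X) (hY : (d, a) ∈ calabiYauLattice S Y) :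
    Function.Periodic (fun i => Subsingleton (X ⟶ Y⟦i⟧)) (d - c) := fun i =>
  propext (homShiftEquiv S hX.some hY.some i).subsingleton_congr.symm

end

theorem stmt1_general {D : Type*} [Category D] [Preadditive D] [HasShift D ℤ]
    (S : D ≌ D) [S.functor.CommShift ℤ]
    (X Y : D) (m n p q : ℤ)
    (hX : Nonempty ((zpowFun S n).obj X ≅ X⟦m⟧))
    (hY : Nonempty ((zpowFun S q).obj Y ≅ Y⟦p⟧))
    (hΔ : n * p - m * q ≠ 0)
    (hvan : (∃ i₀ : ℤ, ∀ i ≤ i₀, ∀ f : X ⟶ Y⟦i⟧, f = 0) ∨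
      (∃ i₀ : ℤ, ∀ i ≥ i₀, ∀ f : X ⟶ Y⟦i⟧, f = 0)) :
    (∀ i : ℤ, ∀ f : X ⟶ Y⟦i⟧, f = 0) ∧ ∀ f : X ⟶ Y, f = 0 := by
  have hXq : (q * m, q * n) ∈ calabiYauLattice S X := by
    simpa using zsmul_mem ((mem_calabiYauLattice S).2 hX) q
  have hYn : (n * p, q * n) ∈ calabiYauLattice S Y := by
    rw [mul_comm q n]
    simpa using zsmul_mem ((mem_calabiYauLattice S).2 hY) n
  have hper : Function.Periodic (fun i => Subsingleton (X ⟶ Y⟦i⟧)) (n * p - m * q) := by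
    rw [mul_comm m q]
    exact periodic_subsingleton_hom_shift S hXq hYn
  have hall : ∀ i : ℤ, Subsingleton (X ⟶ Y⟦i⟧) := by
    rcases hvan with ⟨i₀, h⟩ | ⟨i₀, h⟩
    · exact hper.forall_of_forall_le hΔ fun i hi => subsingleton_of_forall_eq 0 (h i hi)
    · exact hper.forall_of_forall_ge hΔ fun i hi => subsingleton_of_forall_eq 0 (h i hi)
  have : Subsingleton (X ⟶ Y) :=
    ((Iso.refl X).homCongr ((shiftFunctorZero D ℤ).app Y)).symm.subsingleton
  exact ⟨fun i f => Subsingleton.elim f 0, fun f => Subsingleton.elim f 0⟩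

/-- let `D` be an additive category with a shift indexed by `ℤ` and
`S : D ≌ D` an additive auto-equivalence commuting with the shift. If `Sⁿ(X) ≅ X[m]`,
`S^q(Y) ≅ Y[p]`, `Δ = np − mq ≠ 0`, and `Hom(X, Y[i])` vanishes for all `i ≤ i₀` or
for all `i ≥ i₀` (some `i₀`), then `Hom(X, Y[i]) = 0` for every `i ∈ ℤ`; in particular
`Hom(X, Y) = 0`. -/
theorem stmt1 {D : Type*} [Category D] [Preadditive D] [HasShift D ℤ]
    (S : D ≌ D) [S.functor.Additive] [S.functor.CommShift ℤ]
    (X Y : D) (m n p q : ℤ)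
    (hX : Nonempty ((zpowFun S n).obj X ≅ X⟦m⟧))
    (hY : Nonempty ((zpowFun S q).obj Y ≅ Y⟦p⟧))
    (hΔ : n * p - m * q ≠ 0)
    (hvan : (∃ i₀ : ℤ, ∀ i ≤ i₀, ∀ f : X ⟶ Y⟦i⟧, f = 0) ∨
      (∃ i₀ : ℤ, ∀ i ≥ i₀, ∀ f : X ⟶ Y⟦i⟧, f = 0)) :
    (∀ i : ℤ, ∀ f : X ⟶ Y⟦i⟧, f = 0) ∧ ∀ f : X ⟶ Y, f = 0 :=
  stmt1_general S X Y m n p q hX hY hΔ hvan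
end

section
/- Let (Q,I) be a gentle quiver such that every vertex of Q is the source or the target of at least one arrow. Then the following three conditions are equivalent: (1) every vertex of Q is a transition vertex or a crossing vertex; (2) the quiver (Q,I) has no permitted threads; (3) every arrow of Q is contained in a permitted cycle. -/
/-- A gentle quiver `(Q, I)`: a finite quiver with arrow set `A`, vertex set `V`,
source and target maps `s, t`, and a set `I` of composable pairs of arrows
(`rel β α` means `βα ∈ I`, which requires `s β = t α`), subject to the gentleness
conditions: every vertex has at most two incoming and at most two outgoing arrows,
and for every arrow there is at most one continuation (resp. precursor) with and
without relation. -/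
structure GentleQuiver where
  /-- vertices -/
  V : Type
  /-- arrows -/
  A : Type
  fintypeV : Fintype V
  fintypeA : Fintype A
  /-- source of an arrow -/
  s : A → V
  /-- target of an arrow -/
  t : A → V
  /-- `rel β α` means that the composition `βα` lies in the ideal `I`. -/
  rel : A → A → Prop
  rel_comp : ∀ β α, rel β α → s β = t α
  at_most_two_in : ∀ (v : V) (α β γ : A), t α = v → t β = v → t γ = v → α = β ∨ α = γ ∨ β = γ
  at_most_two_out : ∀ (v : V) (α β γ : A), s α = v → s β = v → s γ = v → α = β ∨ α = γ ∨ β = γ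
  succ_nonrel_unique : ∀ α β β', s β = t α → s β' = t α → ¬ rel β α → ¬ rel β' α → β = β'
  succ_rel_unique : ∀ α β β', s β = t α → s β' = t α → rel β α → rel β' α → β = β'
  pred_nonrel_unique : ∀ α γ γ', t γ = s α → t γ' = s α → ¬ rel α γ → ¬ rel α γ' → γ = γ'
  pred_rel_unique : ∀ α γ γ', t γ = s α → t γ' = s α → rel α γ → rel α γ' → γ = γ'

attribute [instance] GentleQuiver.fintypeV GentleQuiver.fintypeA

namespace GentleQuiver

variable (G : GentleQuiver)

/-- `b` may follow `a` in a permitted path: `s b = t a` and `ba ∉ I`. -/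
def PStep (a b : G.A) : Prop := G.s b = G.t a ∧ ¬ G.rel b a

/-- `b` may follow `a` in a forbidden path: `s b = t a` and `ba ∈ I`. -/
def FStep (a b : G.A) : Prop := G.s b = G.t a ∧ G.rel b a

/-- A permitted path `α_n ⋯ α_1`, encoded as the list `[α_1, …, α_n]` of its arrows:
nonempty, with pairwise distinct arrows, consecutive arrows composable and with
`α_{i+1} α_i ∉ I`. -/
def IsPermPath (l : List G.A) : Prop := l ≠ [] ∧ l.Nodup ∧ l.Chain' G.PStep

/-- A permitted cycle: a permitted path which closes up, with `α₁ α_n ∉ I`. -/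
def IsPermCycle (l : List G.A) : Prop :=
  G.IsPermPath l ∧ ∀ a ∈ l.head?, ∀ b ∈ l.getLast?, G.PStep b a

/-- A permitted thread: a permitted path which is not a permitted cycle and cannot be
extended by any arrow on either side. -/
def IsPermThread (l : List G.A) : Prop :=
  G.IsPermPath l ∧ ¬ G.IsPermCycle l ∧
    (∀ b ∈ l.getLast?, ∀ c : G.A, ¬ G.PStep b c) ∧
    (∀ a ∈ l.head?, ∀ c : G.A, ¬ G.PStep c a)

/-- A forbidden path `β_n ⋯ β_1`, encoded as the list `[β_1, …, β_n]` of its arrows: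
nonempty, with pairwise distinct arrows, consecutive arrows composable and with
`β_{i+1} β_i ∈ I`. -/
def IsForbPath (l : List G.A) : Prop := l ≠ [] ∧ l.Nodup ∧ l.Chain' G.FStep

/-- A forbidden cycle: a forbidden path which closes up, with `β₁ β_n ∈ I`. -/
def IsForbCycle (l : List G.A) : Prop :=
  G.IsForbPath l ∧ ∀ a ∈ l.head?, ∀ b ∈ l.getLast?, G.FStep b a

/-- A forbidden thread: a forbidden path which is not a forbidden cycle and cannot be
extended by any arrow on either side. -/
def IsForbThread (l : List G.A) : Prop :=
  G.IsForbPath l ∧ ¬ G.IsForbCycle l ∧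
    (∀ b ∈ l.getLast?, ∀ c : G.A, ¬ G.FStep b c) ∧
    (∀ a ∈ l.head?, ∀ c : G.A, ¬ G.FStep c a)

/-- A transition vertex: exactly one incoming arrow `α`, exactly one outgoing arrow `β`,
and `βα ∉ I`. -/
def IsTransition (v : G.V) : Prop :=
  ∃ α β : G.A, G.t α = v ∧ G.s β = v ∧ (∀ α', G.t α' = v → α' = α) ∧
    (∀ β', G.s β' = v → β' = β) ∧ ¬ G.rel β α

/-- A crossing vertex: exactly two incoming arrows `α₁ ≠ α₂`, exactly two outgoing arrows
`β₁ ≠ β₂`, and (after reindexing) `β_j α_i ∈ I` iff `i = j`. -/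
def IsCrossing (v : G.V) : Prop :=
  ∃ α₁ α₂ β₁ β₂ : G.A, α₁ ≠ α₂ ∧ β₁ ≠ β₂ ∧
    G.t α₁ = v ∧ G.t α₂ = v ∧ G.s β₁ = v ∧ G.s β₂ = v ∧
    (∀ α, G.t α = v → α = α₁ ∨ α = α₂) ∧ (∀ β, G.s β = v → β = β₁ ∨ β = β₂) ∧
    G.rel β₁ α₁ ∧ G.rel β₂ α₂ ∧ ¬ G.rel β₁ α₂ ∧ ¬ G.rel β₂ α₁

/-- The path encoded by `l` starts at the vertex `v` (source of its first arrow). -/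
def StartsAt (l : List G.A) (v : G.V) : Prop := ∀ a ∈ l.head?, G.s a = v

/-- The path encoded by `l` ends at the vertex `v` (target of its last arrow). -/
def EndsAt (l : List G.A) (v : G.V) : Prop := ∀ b ∈ l.getLast?, G.t b = v

end GentleQuiver

/-!
Every arrow has at most one permitted successor and at most one permitted predecessor. If every
arrow has a permitted successor, the successor map is thus a permutation of the finite set of
arrows, and the orbit of an arrow is a permitted cycle through it. If instead some arrow `α` has
none, extend a permitted path ending at `α` backwards as long as possible: a new predecessor lying
on the path would, by uniqueness of successors, be its last arrow `α`, so the path never repeats an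
arrow, and by finiteness it gets stuck at a permitted thread. Finally, at a vertex with an incoming
arrow, "every arrow has a permitted successor and a permitted predecessor" says that each incoming
arrow continues without relation along its own outgoing arrow, i.e. the vertex is a transition or
a crossing vertex.
-/

namespace List

variable {α : Type*} {R : α → α → Prop}

theorem eq_getLast_of_rel_head (hR : ∀ a b b', R a b → R a b' → b = b') {l : List α}
    (hne : l ≠ []) (hnd : l.Nodup) (hch : l.IsChain R) {c : α} (hc : c ∈ l)
    (hcR : R c (l.head hne)) : c = l.getLast hne := by
  obtain ⟨i, hi, rfl⟩ := getElem_of_mem hc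
  rw [getLast_eq_getElem]
  by_contra hlast
  have hi' : i + 1 < l.length := by
    by_contra
    exact hlast (by congr 1; omega)
  have hnext := isChain_iff_getElem.mp hch i hi'
  have : l[i + 1] = l[0] := hR _ _ _ hnext (by rwa [← head_eq_getElem hne])
  have := hnd.getElem_inj_iff.mp this
  omega

theorem exists_rel_of_mem_of_rel_getLast_head {l : List α} (hch : l.IsChain R)
    (hclose : ∀ a ∈ l.head?, ∀ b ∈ l.getLast?, R b a) {b : α} (hb : b ∈ l) : ∃ c, R b c := by
  obtain ⟨l₁, l₂, rfl⟩ := append_of_mem hb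
  cases l₂ with
  | nil => exact ⟨_, hclose _ (head?_eq_some_head (by simp)) b (by simp)⟩
  | cons c l₂ => exact ⟨c, (isChain_cons_cons.mp (isChain_append.mp hch).2.1).1⟩

end List

theorem Function.Injective.exists_orbit_list {α : Type*} [Finite α] {f : α → α}
    (hf : f.Injective) (x : α) :
    ∃ l : List α, l.head? = some x ∧ l.Nodup ∧ l.IsChain (fun a b => f a = b) ∧
      ∀ b ∈ l.getLast?, f b = x := by
  have hpos := Function.minimalPeriod_pos_of_mem_periodicPts (hf.mem_periodicPts x)
  obtain ⟨n, hn⟩ : ∃ n, Function.minimalPeriod f x = n + 1 :=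
    ⟨_, (Nat.succ_pred_eq_of_pos hpos).symm⟩
  refine ⟨(List.range (n + 1)).map (f^[·] x), by simp [List.range_succ_eq_map], ?_, ?_, ?_⟩
  · refine List.Nodup.map_on (fun i hi j hj => ?_) List.nodup_range
    exact Function.iterate_injOn_Iio_minimalPeriod (by simp_all) (by simp_all)
  · rw [List.isChain_map, List.isChain_range_succ]
    exact fun m _ => (Function.iterate_succ_apply' f m x).symm
  · simp only [List.range_succ, List.map_append, List.getLast?_append, List.map_cons,
      List.map_nil, List.getLast?_singleton, Option.some_or, Option.mem_def, Option.some_inj]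
    rintro b rfl
    rw [← Function.iterate_succ_apply' f n x, Nat.succ_eq_add_one, ← hn,
      Function.iterate_minimalPeriod]

namespace GentleQuiver

def op (G : GentleQuiver) : GentleQuiver where
  V := G.V
  A := G.A
  fintypeV := G.fintypeV
  fintypeA := G.fintypeA
  s := G.t
  t := G.s
  rel β α := G.rel α β
  rel_comp β α h := (G.rel_comp α β h).symm
  at_most_two_in := G.at_most_two_out
  at_most_two_out := G.at_most_two_in
  succ_nonrel_unique := G.pred_nonrel_unique
  succ_rel_unique := G.pred_rel_unique
  pred_nonrel_unique := G.succ_nonrel_unique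
  pred_rel_unique := G.succ_rel_unique

variable {G : GentleQuiver} {l : List G.A}

theorem PStep.right_unique {a b b' : G.A} (h : G.PStep a b) (h' : G.PStep a b') : b = b' :=
  G.succ_nonrel_unique a b b' h.1 h'.1 h.2 h'.2

theorem PStep.left_unique {a a' b : G.A} (h : G.PStep a b) (h' : G.PStep a' b) : a = a' :=
  G.pred_nonrel_unique b a a' h.1.symm h'.1.symm h.2 h'.2

theorem pStep_op {a b : G.A} : G.op.PStep a b ↔ G.PStep b a :=
  ⟨fun h => ⟨h.1.symm, h.2⟩, fun h => ⟨h.1.symm, h.2⟩⟩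

theorem IsPermPath.op_reverse (hl : G.IsPermPath l) : G.op.IsPermPath l.reverse :=
  ⟨List.reverse_ne_nil_iff.mpr hl.1, List.nodup_reverse.mpr hl.2.1,
    List.isChain_reverse.mpr (hl.2.2.imp fun _ _ => pStep_op.mpr)⟩

theorem IsPermThread.op_reverse (hl : G.IsPermThread l) : G.op.IsPermThread l.reverse := by
  obtain ⟨hp, hnc, hlast, hhead⟩ := hl
  have hh : l.reverse.head? = l.getLast? := List.head?_reverse
  have ht : l.reverse.getLast? = l.head? := List.getLast?_reverse
  refine ⟨hp.op_reverse, fun ⟨_, hcyc⟩ => hnc ⟨hp, fun a ha b hb => ?_⟩, ?_, ?_⟩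
  · exact pStep_op.mp (hcyc b (hh.trans hb) a (ht.trans ha))
  · exact fun b hb c hc => hhead b (ht.symm.trans hb) c (pStep_op.mp hc)
  · exact fun a ha c hc => hlast a (hh.symm.trans ha) c (pStep_op.mp hc)

theorem IsPermPath.isPermThread (hl : G.IsPermPath l)
    (hlast : ∀ b ∈ l.getLast?, ∀ c, ¬ G.PStep b c) (hhead : ∀ a ∈ l.head?, ∀ c, ¬ G.PStep c a) :
    G.IsPermThread l :=
  ⟨hl, fun ⟨_, hcyc⟩ => hlast _ (List.getLast?_eq_some_getLast hl.1) _
    (hcyc _ (List.head?_eq_some_head hl.1) _ (List.getLast?_eq_some_getLast hl.1)), hlast, hhead⟩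

theorem IsPermCycle.exists_pStep (hl : G.IsPermCycle l) {b : G.A} (hb : b ∈ l) :
    ∃ c, G.PStep b c :=
  List.exists_rel_of_mem_of_rel_getLast_head hl.1.2.2 hl.2 hb

theorem IsPermPath.exists_cons (h2 : ∀ l : List G.A, ¬ G.IsPermThread l) (hl : G.IsPermPath l)
    {α : G.A} (hlast : l.getLast? = some α) (hα : ∀ c, ¬ G.PStep α c) :
    ∃ c, G.IsPermPath (c :: l) := by
  obtain ⟨hne, hnd, hch⟩ := hl
  have hhead := List.head?_eq_some_head hne
  obtain ⟨c, hc⟩ : ∃ c, G.PStep c (l.head hne) := by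
    by_contra! hno
    refine h2 l (IsPermPath.isPermThread ⟨hne, hnd, hch⟩ (fun b hb => ?_) (fun a ha => ?_))
    · exact Option.some_injective _ (hb.symm.trans hlast) ▸ hα
    · exact Option.some_injective _ (ha.symm.trans hhead) ▸ hno
  have hcl : c ∉ l := by
    intro hcl
    have hcα : some c = some α := by
      rw [List.eq_getLast_of_rel_head (R := G.PStep) (fun _ _ _ => PStep.right_unique) hne hnd hch
        hcl hc, ← List.getLast?_eq_some_getLast hne, hlast]
    exact hα _ (Option.some_injective _ hcα ▸ hc)
  refine ⟨c, List.cons_ne_nil c l, List.nodup_cons.mpr ⟨hcl, hnd⟩, List.isChain_cons.mpr ⟨?_, hch⟩⟩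
  rintro b hb
  exact Option.some_injective _ (hhead.symm.trans hb) ▸ hc

theorem exists_pStep_of_forall_not_isPermThread (h2 : ∀ l : List G.A, ¬ G.IsPermThread l)
    (α : G.A) : ∃ β, G.PStep α β := by
  by_contra! hα
  have grow : ∀ n, ∃ l, G.IsPermPath l ∧ l.getLast? = some α ∧ n < l.length := by
    intro n
    induction n with
    | zero =>
      exact ⟨[α], ⟨List.cons_ne_nil α [], List.nodup_singleton α, List.isChain_singleton α⟩, rfl,
        Nat.zero_lt_one⟩
    | succ n ih =>
      obtain ⟨l, hl, hlast, hlen⟩ := ih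
      obtain ⟨c, hc⟩ := hl.exists_cons h2 hlast hα
      exact ⟨c :: l, hc, by simp [List.getLast?_cons, hlast], by simpa using hlen⟩
  obtain ⟨l, ⟨-, hnd, -⟩, -, hlen⟩ := grow (Fintype.card G.A)
  exact hlen.not_ge hnd.length_le_card

theorem exists_pStep_left_of_forall_not_isPermThread (h2 : ∀ l : List G.A, ¬ G.IsPermThread l)
    (α : G.A) : ∃ γ, G.PStep γ α := by
  obtain ⟨γ, hγ⟩ := exists_pStep_of_forall_not_isPermThread (G := G.op)
    (fun l hl => h2 l.reverse hl.op_reverse) α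
  exact ⟨γ, pStep_op.mp hγ⟩

theorem exists_isPermCycle_mem (hs : ∀ a : G.A, ∃ b, G.PStep a b) (α : G.A) :
    ∃ l, G.IsPermCycle l ∧ α ∈ l := by
  choose σ hσ using hs
  have hinj : σ.Injective := fun a a' h => (hσ a).left_unique (h ▸ hσ a')
  obtain ⟨l, hhead, hnd, hch, hclose⟩ := hinj.exists_orbit_list α
  have hne : l ≠ [] := by rintro rfl; cases hhead
  refine ⟨l, ⟨⟨hne, hnd, hch.imp fun a b (hab : σ a = b) => hab ▸ hσ a⟩, fun a ha b hb => ?_⟩,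
    List.mem_of_mem_head? hhead⟩
  obtain rfl : a = α := Option.some_injective _ (ha.symm.trans hhead)
  exact hclose b hb ▸ hσ b

theorem exists_pStep_of_isTransition_or_isCrossing {a : G.A}
    (h : G.IsTransition (G.t a) ∨ G.IsCrossing (G.t a)) : ∃ b, G.PStep a b := by
  rcases h with ⟨α, β, -, hsβ, hin, -, hnr⟩ |
    ⟨α₁, α₂, β₁, β₂, -, -, -, -, hs₁, hs₂, hin, -, -, -, hnr₁₂, hnr₂₁⟩
  · obtain rfl := hin a rfl
    exact ⟨β, hsβ, hnr⟩
  · rcases hin a rfl with rfl | rfl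
    · exact ⟨β₂, hs₂, hnr₂₁⟩
    · exact ⟨β₁, hs₁, hnr₁₂⟩

theorem isCrossing_of_incoming_ne (hs : ∀ a : G.A, ∃ b, G.PStep a b) {v : G.V} {α₁ α₂ : G.A}
    (hne : α₁ ≠ α₂) (h₁ : G.t α₁ = v) (h₂ : G.t α₂ = v) : G.IsCrossing v := by
  obtain ⟨β₂, hβ₂⟩ := hs α₁
  obtain ⟨β₁, hβ₁⟩ := hs α₂
  have hsβ₁ : G.s β₁ = v := hβ₁.1.trans h₂
  have hsβ₂ : G.s β₂ = v := hβ₂.1.trans h₁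
  have hβne : β₁ ≠ β₂ := fun h => hne (hβ₂.left_unique (h ▸ hβ₁))
  have hrel₁ : G.rel β₁ α₁ := by
    by_contra hr
    exact hβne (PStep.right_unique ⟨hsβ₁.trans h₁.symm, hr⟩ hβ₂)
  have hrel₂ : G.rel β₂ α₂ := by
    by_contra hr
    exact hβne (PStep.right_unique hβ₁ ⟨hsβ₂.trans h₂.symm, hr⟩)
  refine ⟨α₁, α₂, β₁, β₂, hne, hβne, h₁, h₂, hsβ₁, hsβ₂, fun α hα => ?_, fun β hβ => ?_,
    hrel₁, hrel₂, hβ₁.2, hβ₂.2⟩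
  · exact (G.at_most_two_in v α α₁ α₂ hα h₁ h₂).imp_right (Or.resolve_right · hne)
  · exact (G.at_most_two_out v β β₁ β₂ hβ hsβ₁ hsβ₂).imp_right (Or.resolve_right · hβne)

theorem isTransition_of_unique_incoming (hs : ∀ a : G.A, ∃ b, G.PStep a b)
    (hp : ∀ a : G.A, ∃ c, G.PStep c a) {v : G.V} {α : G.A} (hα : G.t α = v)
    (huniq : ∀ α', G.t α' = v → α' = α) : G.IsTransition v := by
  obtain ⟨β, hβ⟩ := hs α
  refine ⟨α, β, hα, hβ.1.trans hα, huniq, fun β' hβ' => ?_, hβ.2⟩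
  obtain ⟨γ, hγ⟩ := hp β'
  obtain rfl := huniq γ (hγ.1.symm.trans hβ')
  exact hγ.right_unique hβ

theorem isTransition_or_isCrossing (hs : ∀ a : G.A, ∃ b, G.PStep a b)
    (hp : ∀ a : G.A, ∃ c, G.PStep c a) {v : G.V} (hv : ∃ a : G.A, G.s a = v ∨ G.t a = v) :
    G.IsTransition v ∨ G.IsCrossing v := by
  obtain ⟨α, hα⟩ : ∃ α, G.t α = v := by
    obtain ⟨a, ha | ha⟩ := hv
    · obtain ⟨c, hc⟩ := hp a
      exact ⟨c, hc.1.symm.trans ha⟩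
    · exact ⟨a, ha⟩
  by_cases huniq : ∀ α', G.t α' = v → α' = α
  · exact Or.inl (isTransition_of_unique_incoming hs hp hα huniq)
  · push Not at huniq
    obtain ⟨α₂, hα₂, hne⟩ := huniq
    exact Or.inr (isCrossing_of_incoming_ne hs hne hα₂ hα)

end GentleQuiver

/-- for a gentle quiver `(Q, I)` in which every vertex is the source or
target of at least one arrow, the following are equivalent:
(1) every vertex is a transition vertex or a crossing vertex;
(2) there are no permitted threads;
(3) every arrow lies on a permitted cycle. -/
theorem stmt3 (G : GentleQuiver) (h : ∀ v : G.V, ∃ α : G.A, G.s α = v ∨ G.t α = v) :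
    List.TFAE
      [∀ v : G.V, G.IsTransition v ∨ G.IsCrossing v,
        ∀ l : List G.A, ¬ G.IsPermThread l,
        ∀ α : G.A, ∃ l : List G.A, G.IsPermCycle l ∧ α ∈ l] := by
  tfae_have 1 → 3 := fun h1 => GentleQuiver.exists_isPermCycle_mem fun _ =>
    GentleQuiver.exists_pStep_of_isTransition_or_isCrossing (h1 _)
  tfae_have 3 → 2 := by
    rintro h3 l ⟨⟨hne, -, -⟩, -, hlast, -⟩
    obtain ⟨m, hm, hmem⟩ := h3 (l.getLast hne)
    obtain ⟨c, hc⟩ := hm.exists_pStep hmem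
    exact hlast _ (List.getLast?_eq_some_getLast hne) c hc
  tfae_have 2 → 1 := fun h2 _ => GentleQuiver.isTransition_or_isCrossing
    (GentleQuiver.exists_pStep_of_forall_not_isPermThread h2)
    (GentleQuiver.exists_pStep_left_of_forall_not_isPermThread h2) (h _)
  tfae_finish
end

section
/- Let (Q,I) be a gentle quiver in which every vertex is a transition vertex or a crossing vertex. Then: for every transition vertex j there exists a unique forbidden thread f with s(f) = j; the target t(f) is again a transition vertex; every forbidden thread of (Q,I) starts at a transition vertex (so forbidden threads are in bijection with transition vertices via f ↦ s(f)); and the map κ : Q₀ᵗ → Q₀ᵗ sending a transition vertex j to the target of the unique forbidden thread starting at j is a permutation of the set Q₀ᵗ of transition vertices. -/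
/-!
Forbidden steps `a ⟶ b` (`s b = t a`, `ba ∈ I`) form a partial injection on arrows: by
gentleness each arrow has at most one forbidden successor and at most one forbidden
predecessor. The outgoing arrow of a transition vertex has no forbidden predecessor, so
following forbidden steps from it never revisits an arrow and, the quiver being finite, stops
at a forbidden thread, which is unique because steps are functional. At a crossing vertex every
arrow has a forbidden successor and predecessor, so threads start and end at transition
vertices. Running the same argument backwards, a thread is determined by its last arrow, so
`κ` is injective and hence a permutation of the finite set of transition vertices.
-/

namespace List

variable {α : Type*} {R : α → α → Prop}

theorem IsChain.eq_of_head?_eq (hR : Relator.RightUnique R) {l l' : List α}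
    (hl : l.IsChain R) (hl' : l'.IsChain R) (hhead : l.head? = l'.head?)
    (hmax : ∀ b ∈ l.getLast?, ∀ c, ¬ R b c) (hmax' : ∀ b ∈ l'.getLast?, ∀ c, ¬ R b c) :
    l = l' := by
  induction l generalizing l' with
  | nil => simpa [eq_comm] using hhead
  | cons a t ih =>
    cases l' with
    | nil => simp at hhead
    | cons a' t' =>
      obtain rfl : a = a' := by simpa using hhead
      rcases t with _ | ⟨b, t⟩ <;> rcases t' with _ | ⟨b', t'⟩
      · rfl
      · exact absurd (isChain_cons_cons.1 hl').1 (hmax a rfl b')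
      · exact absurd (isChain_cons_cons.1 hl).1 (hmax' a rfl b)
      · obtain rfl := hR (isChain_cons_cons.1 hl).1 (isChain_cons_cons.1 hl').1
        exact congrArg (a :: ·)
          (ih hl.tail hl'.tail rfl (by simpa using hmax) (by simpa using hmax'))

theorem IsChain.notMem_of_rel_of_mem_getLast? (hR : Relator.LeftUnique R)
    {l : List α} (hl : l.IsChain R) (hnd : l.Nodup) (hhead : ∀ a ∈ l.head?, ∀ c, ¬ R c a)
    {b c : α} (hb : b ∈ l.getLast?) (hbc : R b c) : c ∉ l := by
  intro hc
  obtain ⟨i, hi, rfl⟩ := mem_iff_getElem.1 hc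
  obtain ⟨hne, rfl⟩ := mem_getLast?_eq_getLast hb
  rcases i with _ | i
  · exact hhead _ (by simp [head?_eq_getElem?]) _ hbc
  · have := hR hbc (hl.getElem i hi)
    rw [getLast_eq_getElem, hnd.getElem_inj_iff] at this
    omega

theorem IsChain.exists_maximal_extension [Fintype α] (hR : Relator.LeftUnique R)
    {l : List α} (hl : l.IsChain R) (hnd : l.Nodup) (hhead : ∀ a ∈ l.head?, ∀ c, ¬ R c a) :
    ∃ l' : List α, l'.head? = l.head? ∧ l'.IsChain R ∧ l'.Nodup ∧
      ∀ b ∈ l'.getLast?, ∀ c, ¬ R b c := by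
  by_cases hext : ∃ b ∈ l.getLast?, ∃ c, R b c
  · obtain ⟨b, hb, c, hbc⟩ := hext
    have hne : l ≠ [] := by rintro rfl; simp at hb
    have hhead' : (l ++ [c]).head? = l.head? := head?_append_of_ne_nil l hne
    have hnd' : (l ++ [c]).Nodup := by
      simpa using (nodup_concat l c).2 ⟨hl.notMem_of_rel_of_mem_getLast? hR hnd hhead hb hbc, hnd⟩
    have hl' : (l ++ [c]).IsChain R :=
      hl.append (isChain_singleton c) (fun x hx y hy => by simp_all)
    have : Fintype.card α - (l ++ [c]).length < Fintype.card α - l.length := by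
      have := hnd'.length_le_card
      simp only [length_append, length_singleton] at this ⊢
      omega
    obtain ⟨l', h₁, h₂⟩ := hl'.exists_maximal_extension hR hnd' (hhead' ▸ hhead)
    exact ⟨l', h₁.trans hhead', h₂⟩
  · push Not at hext
    exact ⟨l, rfl, hl, hnd, hext⟩
termination_by Fintype.card α - l.length

end List

namespace GentleQuiver

variable {G : GentleQuiver}

lemma fStep_rightUnique : Relator.RightUnique G.FStep :=
  fun a b b' h h' => G.succ_rel_unique a b b' h.1 h'.1 h.2 h'.2

lemma fStep_leftUnique : Relator.LeftUnique G.FStep :=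
  fun a a' b h h' => G.pred_rel_unique b a a' h.1.symm h'.1.symm h.2 h'.2

lemma StartsAt.unique {l : List G.A} {j j' : G.V} (h : G.StartsAt l j) (h' : G.StartsAt l j')
    (hl : l ≠ []) : j = j' :=
  (h _ (List.head?_eq_some_head hl)).symm.trans (h' _ (List.head?_eq_some_head hl))

lemma head?_eq_of_startsAt {l : List G.A} {j : G.V} {β : G.A} (hl : l ≠ [])
    (hs : G.StartsAt l j) (hβ : ∀ β', G.s β' = j → β' = β) : l.head? = some β := by
  rw [List.head?_eq_some_head hl, hβ _ (hs _ (List.head?_eq_some_head hl))]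

lemma getLast?_eq_of_endsAt {l : List G.A} {j : G.V} {α : G.A} (hl : l ≠ [])
    (he : G.EndsAt l j) (hα : ∀ α', G.t α' = j → α' = α) : l.getLast? = some α := by
  rw [List.getLast?_eq_some_getLast hl, hα _ (he _ (List.getLast?_eq_some_getLast hl))]

lemma IsTransition.not_fStep_of_s_eq {j : G.V} (hj : G.IsTransition j) {a : G.A}
    (ha : G.s a = j) (c : G.A) : ¬ G.FStep c a := by
  obtain ⟨α, β, -, -, hα, hβ, hrel⟩ := hj
  rintro ⟨hca, hrel'⟩
  rw [hα c (hca ▸ ha), hβ a ha] at hrel'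
  exact hrel hrel'

lemma IsCrossing.exists_fStep_of_t_eq {v : G.V} (hv : G.IsCrossing v) {b : G.A}
    (hb : G.t b = v) : ∃ c, G.FStep b c := by
  obtain ⟨α₁, α₂, β₁, β₂, -, -, -, -, hβ₁, hβ₂, hin, -, h₁, h₂, -, -⟩ := hv
  rcases hin b hb with rfl | rfl
  exacts [⟨β₁, hβ₁.trans hb.symm, h₁⟩, ⟨β₂, hβ₂.trans hb.symm, h₂⟩]

lemma IsCrossing.exists_fStep_of_s_eq {v : G.V} (hv : G.IsCrossing v) {a : G.A}
    (ha : G.s a = v) : ∃ c, G.FStep c a := by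
  obtain ⟨α₁, α₂, β₁, β₂, -, -, hα₁, hα₂, -, -, -, hout, h₁, h₂, -, -⟩ := hv
  rcases hout a ha with rfl | rfl
  exacts [⟨α₁, ha.trans hα₁.symm, h₁⟩, ⟨α₂, ha.trans hα₂.symm, h₂⟩]

/-- A forbidden cycle would give a forbidden step into its first arrow. -/
lemma IsForbPath.isForbThread {l : List G.A} (hp : G.IsForbPath l)
    (hhead : ∀ a ∈ l.head?, ∀ c, ¬ G.FStep c a) (hlast : ∀ b ∈ l.getLast?, ∀ c, ¬ G.FStep b c) :
    G.IsForbThread l := by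
  refine ⟨hp, fun ⟨_, hcyc⟩ => ?_, hlast, hhead⟩
  exact hhead _ (List.head?_eq_some_head hp.1) _
    (hcyc _ (List.head?_eq_some_head hp.1) _ (List.getLast?_eq_some_getLast hp.1))

lemma IsForbThread.eq_of_head?_eq {l l' : List G.A} (hl : G.IsForbThread l)
    (hl' : G.IsForbThread l') (h : l.head? = l'.head?) : l = l' :=
  List.IsChain.eq_of_head?_eq fStep_rightUnique hl.1.2.2 hl'.1.2.2 h hl.2.2.1 hl'.2.2.1

lemma IsForbThread.eq_of_getLast?_eq {l l' : List G.A} (hl : G.IsForbThread l)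
    (hl' : G.IsForbThread l') (h : l.getLast? = l'.getLast?) : l = l' := by
  refine List.reverse_injective
    (List.IsChain.eq_of_head?_eq fStep_leftUnique.flip ?_ ?_ ?_ ?_ ?_)
  · exact List.isChain_reverse.2 hl.1.2.2
  · exact List.isChain_reverse.2 hl'.1.2.2
  · rwa [List.head?_reverse, List.head?_reverse]
  · rw [List.getLast?_reverse]; exact hl.2.2.2
  · rw [List.getLast?_reverse]; exact hl'.2.2.2

lemma exists_isForbThread_startsAt {j : G.V} (hj : G.IsTransition j) :
    ∃ l, G.IsForbThread l ∧ G.StartsAt l j := by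
  obtain ⟨β, hβ⟩ : ∃ β, G.s β = j := let ⟨_, β, _, hβ, _⟩ := hj; ⟨β, hβ⟩
  have hhead : ∀ a ∈ [β].head?, ∀ c, ¬ G.FStep c a := by
    rintro a ⟨⟩
    exact hj.not_fStep_of_s_eq hβ
  obtain ⟨l, hhd, hc, hnd, hmax⟩ := (List.isChain_singleton β).exists_maximal_extension
    fStep_leftUnique (List.nodup_singleton β) hhead
  have hne : l ≠ [] := by rintro rfl; simp at hhd
  refine ⟨l, IsForbPath.isForbThread ⟨hne, hnd, hc⟩ (hhd ▸ hhead) hmax, ?_⟩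
  rintro a ha
  obtain rfl : a = β := by simpa [hhd] using ha.symm
  exact hβ

lemma existsUnique_isForbThread_startsAt {j : G.V} (hj : G.IsTransition j) :
    ∃! l, G.IsForbThread l ∧ G.StartsAt l j := by
  obtain ⟨l, hl, hs⟩ := exists_isForbThread_startsAt hj
  obtain ⟨-, β, -, -, -, hβ, -⟩ := hj
  refine ⟨l, ⟨hl, hs⟩, fun l' ⟨hl', hs'⟩ => hl'.eq_of_head?_eq hl ?_⟩
  rw [head?_eq_of_startsAt hl'.1.1 hs' hβ, head?_eq_of_startsAt hl.1.1 hs hβ]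

lemma IsForbThread.eq_of_endsAt {j : G.V} (hj : G.IsTransition j) {l l' : List G.A}
    (hl : G.IsForbThread l) (hl' : G.IsForbThread l') (he : G.EndsAt l j) (he' : G.EndsAt l' j) :
    l = l' := by
  obtain ⟨α, -, -, -, hα, -, -⟩ := hj
  refine hl.eq_of_getLast?_eq hl' ?_
  rw [getLast?_eq_of_endsAt hl.1.1 he hα, getLast?_eq_of_endsAt hl'.1.1 he' hα]

lemma IsForbThread.isTransition_t_of_mem_getLast?
    (hG : ∀ v, G.IsTransition v ∨ G.IsCrossing v) {l : List G.A} (hl : G.IsForbThread l)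
    {b : G.A} (hb : b ∈ l.getLast?) : G.IsTransition (G.t b) :=
  (hG _).resolve_right fun hv =>
    let ⟨c, hc⟩ := hv.exists_fStep_of_t_eq rfl
    hl.2.2.1 b hb c hc

lemma IsForbThread.isTransition_s_of_mem_head?
    (hG : ∀ v, G.IsTransition v ∨ G.IsCrossing v) {l : List G.A} (hl : G.IsForbThread l)
    {a : G.A} (ha : a ∈ l.head?) : G.IsTransition (G.s a) :=
  (hG _).resolve_right fun hv =>
    let ⟨c, hc⟩ := hv.exists_fStep_of_s_eq rfl
    hl.2.2.2 a ha c hc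

end GentleQuiver

/-- let `(Q, I)` be a gentle quiver in which every vertex is a transition
vertex or a crossing vertex.  Then: every transition vertex `j` is the start of a unique
forbidden thread; the target of that forbidden thread is again a transition vertex; every
forbidden thread starts at a transition vertex (so forbidden threads are in bijection with
transition vertices via `f ↦ s(f)`); and any map `κ` on the set of transition vertices
sending `j` to the target of the forbidden thread starting at `j` is a permutation. -/
theorem stmt4 (G : GentleQuiver) (hG : ∀ v : G.V, G.IsTransition v ∨ G.IsCrossing v) :
    (∀ j : G.V, G.IsTransition j →
      ∃! l : List G.A, G.IsForbThread l ∧ G.StartsAt l j) ∧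
    (∀ (j : G.V) (l : List G.A), G.IsTransition j → G.IsForbThread l → G.StartsAt l j →
      ∀ b ∈ l.getLast?, G.IsTransition (G.t b)) ∧
    (∀ l : List G.A, G.IsForbThread l → ∀ a ∈ l.head?, G.IsTransition (G.s a)) ∧
    (∀ κ : {v : G.V // G.IsTransition v} → {v : G.V // G.IsTransition v},
      (∀ (j : {v : G.V // G.IsTransition v}) (l : List G.A),
        G.IsForbThread l → G.StartsAt l j.1 → G.EndsAt l (κ j).1) →
      Function.Bijective κ) := by
  refine ⟨fun _ hj => GentleQuiver.existsUnique_isForbThread_startsAt hj,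
    fun _ _ _ hl _ _ hb => hl.isTransition_t_of_mem_getLast? hG hb,
    fun _ hl _ ha => hl.isTransition_s_of_mem_head? hG ha, fun κ hκ => ?_⟩
  refine Finite.injective_iff_bijective.1 fun j₁ j₂ hκj => ?_
  obtain ⟨l₁, hl₁, hs₁⟩ := GentleQuiver.exists_isForbThread_startsAt j₁.2
  obtain ⟨l₂, hl₂, hs₂⟩ := GentleQuiver.exists_isForbThread_startsAt j₂.2
  obtain rfl : l₁ = l₂ :=
    hl₁.eq_of_endsAt (κ j₁).2 hl₂ (hκ j₁ l₁ hl₁ hs₁) (hκj ▸ hκ j₂ l₂ hl₂ hs₂)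
  exact Subtype.ext (hs₁.unique hs₂ hl₁.1.1)
end

section
/- Let (Q,I) be a gentle quiver in which every vertex is a transition vertex or a crossing vertex. Then: for every arrow α there exists exactly one arrow σ(α) with s(σ(α)) = t(α) and σ(α)α ∉ I; the resulting map σ : Q₁ → Q₁ is a permutation of the set of arrows; and for every arrow α there is a unique permitted cycle whose first arrow is α, namely σ^{p−1}(α)⋯σ(α)α where p is the cardinality of the σ-orbit of α. In particular the permitted cycles of (Q,I), up to rotation, are in bijection with the σ-orbits in Q₁. -/
/-!
At a transition or crossing vertex each incoming arrow has exactly one permitted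
continuation, so `PStep` is the graph of a map `σ`; by gentleness an arrow has at most one
permitted predecessor, so `σ` is injective, hence bijective on the finite set of arrows.
A permitted path starting with `α` is then forced to be `α, σ α, σ² α, …`; it closes up
exactly when its length is a period of `α`, and its arrows are distinct exactly when that
length is at most the minimal period. So the permitted cycle starting with `α` is the
`σ`-orbit of `α` listed in order, and rotating a cycle keeps its first arrow in the same
orbit.
-/

namespace List

variable {α : Type*}

theorem ofFn_iterate (f : α → α) (x : α) (n : ℕ) :
    ofFn (fun i : Fin n => f^[i] x) = iterate f x n :=
  ext_getElem (by simp) fun i _ _ => by simp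

theorem isChain_iterate (f : α → α) (x : α) (n : ℕ) :
    (iterate f x n).IsChain fun a b => f a = b := by
  induction n generalizing x with
  | zero => exact .nil
  | succ n ih =>
    cases n with
    | zero => exact .singleton x
    | succ n => exact isChain_cons_cons.2 ⟨rfl, ih (f x)⟩

theorem eq_iterate_of_isChain {f : α → α} {l : List α} {x : α} (hx : l.head? = some x)
    (h : l.IsChain fun a b => f a = b) : l = iterate f x l.length := by
  induction l generalizing x with
  | nil => cases hx
  | cons a l ih =>
    obtain rfl : a = x := Option.some_inj.1 hx
    cases l with
    | nil => rfl
    | cons b l =>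
      obtain ⟨rfl, h⟩ := isChain_cons_cons.1 h
      rw [length_cons, iterate, ← ih rfl h]

theorem getLast?_iterate_succ (f : α → α) (x : α) (n : ℕ) :
    (iterate f x (n + 1)).getLast? = some (f^[n] x) := by
  rw [getLast?_eq_getElem?, length_iterate, Nat.add_sub_cancel,
    getElem?_iterate _ _ _ _ n.lt_succ_self]

end List

namespace Function

variable {α : Type*} {f : α → α} {x : α} {n : ℕ}

theorem periodicOrbit_eq_iterate (f : α → α) (x : α) :
    periodicOrbit f x = (List.iterate f x (minimalPeriod f x) : Cycle α) := by
  rw [periodicOrbit_def, List.range_map_iterate]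

theorem nodup_iterate_minimalPeriod (f : α → α) (x : α) :
    (List.iterate f x (minimalPeriod f x)).Nodup := by
  simpa [periodicOrbit_eq_iterate] using nodup_periodicOrbit (f := f) (x := x)

theorem IsPeriodicPt.minimalPeriod_eq_of_nodup_iterate (hn : IsPeriodicPt f n x) (h0 : 0 < n)
    (hnd : (List.iterate f x n).Nodup) : minimalPeriod f x = n := by
  refine (hn.minimalPeriod_le h0).antisymm (not_lt.1 fun hlt => ?_)
  exact (hn.minimalPeriod_pos h0).ne' <| (hnd.getElem_inj_iff (i := minimalPeriod f x) (j := 0)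
    (hi := by simpa using hlt) (hj := by simpa using h0)).1 (by simp)

theorem quot_mk_iterate (f : α → α) (n : ℕ) (x : α) :
    Quot.mk (fun a b => f a = b) (f^[n] x) = Quot.mk _ x := by
  induction n with
  | zero => rfl
  | succ n ih =>
    rw [iterate_succ_apply', ← ih]
    exact (Quot.sound (r := fun a b => f a = b) rfl).symm

theorem isRotated_iterate_apply (hx : x ∈ periodicPts f) :
    List.iterate f x (minimalPeriod f x) ~r List.iterate f (f x) (minimalPeriod f (f x)) := by
  rw [← Cycle.coe_eq_coe, ← periodicOrbit_eq_iterate, ← periodicOrbit_eq_iterate,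
    periodicOrbit_apply_eq hx]

end Function

namespace GentleQuiver

open Function

variable (G : GentleQuiver)

theorem existsUnique_pStep (hG : ∀ v : G.V, G.IsTransition v ∨ G.IsCrossing v) (α : G.A) :
    ∃! β, G.PStep α β := by
  rcases hG (G.t α) with ⟨a, b, -, hsb, hin, hout, hnr⟩ |
    ⟨a₁, a₂, b₁, b₂, -, -, -, -, hs₁, hs₂, hin, hout, hr₁₁, hr₂₂, hnr₁₂, hnr₂₁⟩
  · obtain rfl := hin α rfl
    exact ⟨b, ⟨hsb, hnr⟩, fun β h => hout β h.1⟩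
  · rcases hin α rfl with rfl | rfl
    · refine ⟨b₂, ⟨hs₂, hnr₂₁⟩, fun β h => (hout β h.1).resolve_left ?_⟩
      rintro rfl; exact h.2 hr₁₁
    · refine ⟨b₁, ⟨hs₁, hnr₁₂⟩, fun β h => (hout β h.1).resolve_right ?_⟩
      rintro rfl; exact h.2 hr₂₂

variable {G} {σ : G.A → G.A}

theorem injective_of_pStep (hσ : ∀ α, G.PStep α (σ α)) : Injective σ := fun a b h =>
  G.pred_nonrel_unique (σ a) a b (hσ a).1.symm (h ▸ (hσ b).1.symm) (hσ a).2 (h ▸ (hσ b).2)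

theorem pStep_iff (hG : ∀ v : G.V, G.IsTransition v ∨ G.IsCrossing v)
    (hσ : ∀ α, G.PStep α (σ α)) {a b : G.A} : G.PStep a b ↔ σ a = b :=
  ⟨fun h => ((G.existsUnique_pStep hG a).unique (hσ a) h), fun h => h ▸ hσ a⟩

theorem isPermCycle_iterate (hG : ∀ v : G.V, G.IsTransition v ∨ G.IsCrossing v)
    (hσ : ∀ α, G.PStep α (σ α)) (α : G.A) :
    G.IsPermCycle (List.iterate σ α (minimalPeriod σ α)) := by
  obtain ⟨p, hp⟩ := Nat.exists_eq_add_one.2 (minimalPeriod_pos_of_mem_periodicPts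
    ((injective_of_pStep hσ).mem_periodicPts α))
  refine ⟨⟨by simp [hp], nodup_iterate_minimalPeriod σ α,
    (List.isChain_iterate σ α _).imp fun a b h => (pStep_iff hG hσ).2 h⟩, ?_⟩
  rw [hp, List.getLast?_iterate_succ]
  rintro a ⟨⟩ b ⟨⟩
  rw [pStep_iff hG hσ, ← iterate_succ_apply' σ p, ← Nat.add_one, ← hp, iterate_minimalPeriod]

theorem eq_iterate_of_isPermCycle (hG : ∀ v : G.V, G.IsTransition v ∨ G.IsCrossing v)
    (hσ : ∀ α, G.PStep α (σ α)) {α : G.A} {l : List G.A} (hl : G.IsPermCycle l)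
    (hα : l.head? = some α) : l = List.iterate σ α (minimalPeriod σ α) := by
  obtain ⟨⟨hne, hnd, hchain⟩, hclosed⟩ := hl
  have hl : l = List.iterate σ α l.length :=
    List.eq_iterate_of_isChain hα (hchain.imp fun a b h => (pStep_iff hG hσ).1 h)
  obtain ⟨n, hn⟩ := Nat.exists_eq_add_one.2 (List.length_pos_iff.2 hne)
  have hper : IsPeriodicPt σ l.length α := by
    have := hclosed α hα (σ^[n] α) (by rw [hl, hn, List.getLast?_iterate_succ]; rfl)
    rw [hn, IsPeriodicPt, IsFixedPt, iterate_succ_apply', (pStep_iff hG hσ).1 this]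
  rwa [hper.minimalPeriod_eq_of_nodup_iterate (hn ▸ n.succ_pos) (hl ▸ hnd)]

theorem nonempty_permCycle_quot_rotate_equiv
    (hG : ∀ v : G.V, G.IsTransition v ∨ G.IsCrossing v) (hσ : ∀ α, G.PStep α (σ α)) :
    Nonempty (Quot (fun l l' : {l : List G.A // G.IsPermCycle l} => ∃ k, l'.1 = l.1.rotate k) ≃
      Quot (fun a b : G.A => σ a = b)) := by
  let orbit (α : G.A) := List.iterate σ α (minimalPeriod σ α)
  have hcyc (α : G.A) : G.IsPermCycle (orbit α) := isPermCycle_iterate hG hσ α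
  have head_orbit (α : G.A) : (orbit α).head (hcyc α).1.1 = α := by
    simp [orbit, List.head_eq_getElem_zero]
  have eq_orbit (l : {l // G.IsPermCycle l}) : l.1 = orbit (l.1.head l.2.1.1) :=
    eq_iterate_of_isPermCycle hG hσ l.2 (List.head?_eq_some_head _)
  refine ⟨⟨Quot.lift (fun l => Quot.mk _ (l.1.head l.2.1.1)) ?_,
    Quot.lift (fun α => Quot.mk _ ⟨orbit α, hcyc α⟩) ?_, ?_, ?_⟩⟩
  · rintro l l' ⟨k, hk⟩
    have hmem : l'.1.head l'.2.1.1 ∈ l.1.rotate k := hk ▸ List.head_mem _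
    rw [List.mem_rotate, eq_orbit l] at hmem
    obtain ⟨m, -, hm⟩ := List.mem_iterate.1 hmem
    simp only [hm, quot_mk_iterate]
  · rintro α _ rfl
    obtain ⟨k, hk⟩ := isRotated_iterate_apply ((injective_of_pStep hσ).mem_periodicPts α)
    exact Quot.sound ⟨k, hk.symm⟩
  · rintro ⟨l⟩
    exact congrArg _ (Subtype.ext (eq_orbit l).symm)
  · rintro ⟨α⟩
    exact congrArg _ (head_orbit α)

end GentleQuiver

/-- let `(Q, I)` be a gentle quiver in which every vertex is a transition or
crossing vertex.  Then every arrow `α` has a unique successor `σ(α)` with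
`s(σ(α)) = t(α)` and `σ(α)α ∉ I`; any map `σ` satisfying this specification is a
permutation of the arrows; for every arrow `α` there is a unique permitted cycle starting
with `α`, namely `σ^{p−1}(α) ⋯ σ(α) α` where `p` is the cardinality of the `σ`-orbit of
`α` (its minimal period); and the permitted cycles up to rotation are in bijection with
the `σ`-orbits of arrows. -/
theorem stmt5 (G : GentleQuiver) (hG : ∀ v : G.V, G.IsTransition v ∨ G.IsCrossing v) :
    (∀ α : G.A, ∃! β : G.A, G.s β = G.t α ∧ ¬ G.rel β α) ∧
    (∀ σ : G.A → G.A, (∀ α : G.A, G.s (σ α) = G.t α ∧ ¬ G.rel (σ α) α) →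
      Function.Bijective σ ∧
      (∀ α : G.A,
        G.IsPermCycle
          (List.ofFn (fun i : Fin (Function.minimalPeriod σ α) => σ^[(i : ℕ)] α)) ∧
        ∀ l : List G.A, G.IsPermCycle l → l.head? = some α →
          l = List.ofFn (fun i : Fin (Function.minimalPeriod σ α) => σ^[(i : ℕ)] α)) ∧
      Nonempty
        (Quot (fun l l' : {l : List G.A // G.IsPermCycle l} => ∃ k, l'.1 = l.1.rotate k) ≃
          Quot (fun a b : G.A => σ a = b))) := by
  refine ⟨G.existsUnique_pStep hG, fun σ hσ => ?_⟩
  simp only [List.ofFn_iterate]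
  exact ⟨(G.injective_of_pStep hσ).bijective_of_finite, fun α =>
    ⟨G.isPermCycle_iterate hG hσ α, fun _ hl hα => G.eq_iterate_of_isPermCycle hG hσ hl hα⟩,
    G.nonempty_permCycle_quot_rotate_equiv hG hσ⟩
end

section
/- Let Γ = (V, E, μ) be a truncated graph with incidence matrix B_Γ ∈ Mat_{E×V}(ℤ). Then the kernel of the ℤ-linear map ℤ^V → ℤ^E, x ↦ B_Γ x, is a free abelian group of rank bc(Γ), where bc(Γ) is the number of connected components of Γ that are bipartite without truncated edges. In particular, the rank of B_Γ equals |V| − bc(Γ). -/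
/-- A truncated graph `Γ = (V, E, μ)`: finite sets of vertices `V` and edges `E`
together with a multiplicity map `μ : E → V → ℕ` such that every edge has total
multiplicity `1` (a truncated edge) or `2` (an ordinary edge or a loop). -/
structure TruncGraph (V E : Type) [Fintype V] where
  /-- multiplicity of a vertex in an edge -/
  μ : E → V → ℕ
  total_deg : ∀ e : E, (∑ v, μ e v) = 1 ∨ (∑ v, μ e v) = 2

namespace TruncGraph

variable {V E : Type} [Fintype V] [Fintype E] (Γ : TruncGraph V E)

/-- An edge `e` is incident to a vertex `v` if `μ e v ≠ 0`. -/
def Incid (e : E) (v : V) : Prop := Γ.μ e v ≠ 0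

/-- A loop: an edge with multiplicity `2` at some vertex. -/
def IsLoop (e : E) : Prop := ∃ v : V, Γ.μ e v = 2

/-- A truncated edge: total multiplicity `1`. -/
def IsTrunc (e : E) : Prop := (∑ v, Γ.μ e v) = 1

/-- An ordinary edge: neither a loop nor a truncated edge
(equivalently, incident to exactly two distinct vertices with multiplicity one each). -/
def IsOrd (e : E) : Prop := ¬ Γ.IsLoop e ∧ ¬ Γ.IsTrunc e

/-- Two vertices are adjacent if some edge is incident to both. -/
def Adj (v w : V) : Prop := ∃ e : E, Γ.Incid e v ∧ Γ.Incid e w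

/-- Connectivity: the reflexive-transitive closure of adjacency. -/
def Conn (v w : V) : Prop := Relation.ReflTransGen Γ.Adj v w

/-- `Γ` is connected. -/
def IsConnected : Prop := ∀ v w : V, Γ.Conn v w

/-- The edge `e` joins the vertices `a` and `b` (for a loop, `a = b`;
truncated edges join no pair of vertices). -/
def Joins (e : E) (a b : V) : Prop :=
  Γ.Incid e a ∧ Γ.Incid e b ∧ (a = b → Γ.μ e a = 2)

/-- `Γ` contains a cycle of odd length: a closed walk with an odd number of pairwise
distinct non-truncated edges (a loop counts as a cycle of length `1`). -/
def HasOddCycle : Prop :=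
  ∃ ℓ : ℕ, Odd ℓ ∧ ∃ (v : ℕ → V) (e : ℕ → E), v 0 = v ℓ ∧
    (∀ i j : ℕ, i < ℓ → j < ℓ → e i = e j → i = j) ∧
    ∀ i : ℕ, i < ℓ → Γ.Joins (e i) (v i) (v (i + 1))

/-- The edge-vertex incidence matrix `B_Γ ∈ Mat_{E×V}(ℤ)`. -/
def B : Matrix E V ℤ := fun e v => (Γ.μ e v : ℤ)

/-- Connectivity through ordinary edges only. -/
def ConnOrd (v w : V) : Prop :=
  Relation.ReflTransGen (fun x y : V => ∃ e : E, Γ.IsOrd e ∧ Γ.Incid e x ∧ Γ.Incid e y) v w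

/-- `Γ` is a tree with a unique truncated edge: connected, no loops, exactly one
truncated edge, and the ordinary edges form a tree on `V` (they connect `V` and number
`|V| − 1`); in particular `|E| = |V|`. -/
def IsTreeWithUniqueTruncEdge : Prop :=
  Γ.IsConnected ∧ (∀ e : E, ¬ Γ.IsLoop e) ∧ (∃! e : E, Γ.IsTrunc e) ∧
    (∀ v w : V, Γ.ConnOrd v w) ∧
    Nat.card {e : E // Γ.IsOrd e} + 1 = Fintype.card V

/-- `Γ` is a tree without truncated edges: connected, no loops, no truncated edges,
and `|E| = |V| − 1`. -/
def IsTreeNoTruncEdge : Prop :=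
  Γ.IsConnected ∧ (∀ e : E, ¬ Γ.IsLoop e) ∧ (∀ e : E, ¬ Γ.IsTrunc e) ∧
    Fintype.card E + 1 = Fintype.card V

/-- `Γ` is bipartite without truncated edges: it has no loops and no truncated edges,
and admits a `2`-coloring of its vertices such that every edge is incident to vertices
of both colors. -/
def IsBipartiteNoTrunc : Prop :=
  (∀ e : E, ¬ Γ.IsLoop e) ∧ (∀ e : E, ¬ Γ.IsTrunc e) ∧
    ∃ c : V → Bool, ∀ (e : E) (v w : V), Γ.Incid e v → Γ.Incid e w → v ≠ w → c v ≠ c w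

/-- The component of `v` is bipartite without truncated edges: no loop or truncated edge
is incident to a vertex of the component of `v`, and there is a `2`-coloring of the
vertices such that every edge of the component joins vertices of different colors. -/
def GoodCompAt (v : V) : Prop :=
  (∀ (e : E) (w : V), Γ.Conn v w → Γ.Incid e w → ¬ Γ.IsLoop e ∧ ¬ Γ.IsTrunc e) ∧
    ∃ c : V → Bool, ∀ (e : E) (w w' : V),
      Γ.Conn v w → Γ.Incid e w → Γ.Incid e w' → w ≠ w' → c w ≠ c w'

/-- `bc(Γ)`: the number of connected components of `Γ` which are bipartite without
truncated edges (components are realized as classes of the quotient of `V` by the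
equivalence relation generated by adjacency). -/
noncomputable def bc : ℕ :=
  Set.ncard {q : Quot Γ.Adj | ∃ v : V, q = Quot.mk Γ.Adj v ∧ Γ.GoodCompAt v}

end TruncGraph


/-!
A vector `x` lies in the kernel of `B_Γ` iff `x a + x b = 0` along every ordinary edge `{a, b}`
and `x a = 0` at every vertex carrying a loop (`2 x a = 0`) or a truncated edge. Hence `|x|` is
constant on each component, and a component on which `x` does not vanish has no loops or
truncated edges and is 2-colored by the sign of `x`. Conversely, a 2-coloring of a bipartite
component without truncated edges gives the kernel vector `±1` on that component and `0` off
it. So evaluating at one vertex of each such component is an isomorphism of the kernel onto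
`ℤ^bc(Γ)`, and rank–nullity gives the rank.
-/

theorem Matrix.rank_eq_card_sub_of_ker_equiv {m n R : Type*} [Fintype n] [CommRing R]
    [IsDomain R] {A : Matrix m n R} {k : ℕ}
    (e : LinearMap.ker A.mulVecLin ≃ₗ[R] (Fin k → R)) :
    A.rank = Fintype.card n - k := by
  have h := Submodule.finrank_quotient_add_finrank (LinearMap.ker A.mulVecLin)
  rw [A.mulVecLin.quotKerEquivRange.finrank_eq, e.finrank_eq, Module.finrank_fin_fun,
    Module.finrank_fintype_fun_eq_card] at h
  rw [Matrix.rank]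
  omega

namespace TruncGraph

open scoped Matrix

variable {V E : Type} [Fintype V] (Γ : TruncGraph V E)

section Edges

variable {e : E} {a b : V}

lemma mu_le_sum (e : E) (a : V) : Γ.μ e a ≤ ∑ v, Γ.μ e v :=
  Finset.single_le_sum (fun _ _ => Nat.zero_le _) (Finset.mem_univ a)

lemma mu_add_mu_le_sum (e : E) (hab : a ≠ b) : Γ.μ e a + Γ.μ e b ≤ ∑ v, Γ.μ e v := by
  classical
  rw [← Finset.sum_pair hab]
  exact Finset.sum_le_sum_of_subset (Finset.subset_univ _)

lemma sum_mu_le_two (e : E) : ∑ v, Γ.μ e v ≤ 2 := by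
  rcases Γ.total_deg e with h | h <;> omega

lemma exists_incid (e : E) : ∃ a, Γ.Incid e a := by
  by_contra! h
  have h0 : ∑ v, Γ.μ e v = 0 := Finset.sum_eq_zero fun v _ => not_not.mp (h v)
  rcases Γ.total_deg e with h1 | h1 <;> omega

lemma mu_eq_of_incid_of_ne (hab : a ≠ b) (ha : Γ.Incid e a) (hb : Γ.Incid e b) :
    Γ.μ e a = 1 ∧ Γ.μ e b = 1 ∧ ∀ v, v ≠ a → v ≠ b → Γ.μ e v = 0 := by
  classical
  have hpair := Γ.mu_add_mu_le_sum e hab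
  have htot := Γ.sum_mu_le_two e
  unfold Incid at ha hb
  refine ⟨by omega, by omega, fun v hva hvb => ?_⟩
  have htriple : ∑ u ∈ {a, b, v}, Γ.μ e u ≤ ∑ u, Γ.μ e u :=
    Finset.sum_le_sum_of_subset (Finset.subset_univ _)
  rw [Finset.sum_insert (by simp [hab, hva.symm]), Finset.sum_pair hvb.symm] at htriple
  omega

lemma isOrd_iff : Γ.IsOrd e ↔ ∃ a b, a ≠ b ∧ Γ.Incid e a ∧ Γ.Incid e b := by
  constructor
  · rintro ⟨hloop, htrunc⟩
    have htot : ∑ v, Γ.μ e v = 2 := (Γ.total_deg e).resolve_left htrunc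
    obtain ⟨a, ha⟩ := Γ.exists_incid e
    have ha1 : Γ.μ e a = 1 := by
      have := Γ.mu_le_sum e a
      have : Γ.μ e a ≠ 2 := fun h => hloop ⟨a, h⟩
      unfold Incid at ha
      omega
    by_contra! hb
    have : ∑ v, Γ.μ e v = Γ.μ e a :=
      Fintype.sum_eq_single a fun v hva => not_not.mp (hb a v hva.symm ha)
    omega
  · rintro ⟨a, b, hab, ha, hb⟩
    obtain ⟨ha1, hb1, hrest⟩ := Γ.mu_eq_of_incid_of_ne hab ha hb
    refine ⟨fun ⟨v, hv⟩ => ?_, fun htrunc => ?_⟩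
    · by_cases hva : v = a
      · subst hva; omega
      by_cases hvb : v = b
      · subst hvb; omega
      · simp [hrest v hva hvb] at hv
    · have := Γ.mu_add_mu_le_sum e hab
      unfold IsTrunc at htrunc
      omega

lemma eq_of_incid_of_not_isOrd (he : ¬ Γ.IsOrd e) (ha : Γ.Incid e a) (hb : Γ.Incid e b) :
    b = a := by
  by_contra hba
  exact he ((Γ.isOrd_iff).mpr ⟨a, b, Ne.symm hba, ha, hb⟩)

lemma mulVec_B_apply (x : V → ℤ) (e : E) : (Γ.B *ᵥ x) e = ∑ v, (Γ.μ e v : ℤ) * x v := rfl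

lemma mulVec_B_apply_of_incid_ne (hab : a ≠ b) (ha : Γ.Incid e a) (hb : Γ.Incid e b)
    (x : V → ℤ) : (Γ.B *ᵥ x) e = x a + x b := by
  classical
  obtain ⟨ha1, hb1, hrest⟩ := Γ.mu_eq_of_incid_of_ne hab ha hb
  rw [mulVec_B_apply, ← Finset.sum_subset (Finset.subset_univ {a, b}) fun v _ hv => ?_,
    Finset.sum_pair hab, ha1, hb1]
  · ring
  · simp only [Finset.mem_insert, Finset.mem_singleton, not_or] at hv
    simp [hrest v hv.1 hv.2]

lemma mulVec_B_apply_of_not_isOrd (he : ¬ Γ.IsOrd e) (ha : Γ.Incid e a) (x : V → ℤ) :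
    (Γ.B *ᵥ x) e = Γ.μ e a * x a := by
  rw [mulVec_B_apply, Fintype.sum_eq_single a fun v hva => ?_]
  have : Γ.μ e v = 0 := not_not.mp fun hv => hva (Γ.eq_of_incid_of_not_isOrd he ha hv)
  simp [this]

end Edges

section Components

instance : Std.Symm Γ.Adj := ⟨fun _ _ ⟨e, ha, hb⟩ => ⟨e, hb, ha⟩⟩

variable {Γ}

lemma conn_iff_quot_mk_eq {v w : V} : Γ.Conn v w ↔ Quot.mk Γ.Adj v = Quot.mk Γ.Adj w := by
  rw [Conn, ← Relation.EqvGen.eqvGen_eq_reflTransGen]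
  exact ⟨Quot.eqvGen_sound, Quot.eqvGen_exact⟩

lemma Conn.of_incid {v a b : V} {e : E} (h : Γ.Conn v a) (ha : Γ.Incid e a)
    (hb : Γ.Incid e b) : Γ.Conn v b :=
  h.tail ⟨e, ha, hb⟩

lemma GoodCompAt.of_conn {v u : V} (hv : Γ.GoodCompAt v) (hvu : Γ.Conn v u) :
    Γ.GoodCompAt u := by
  obtain ⟨hedges, c, hc⟩ := hv
  exact ⟨fun e w huw => hedges e w (hvu.trans huw),
    c, fun e w w' huw => hc e w w' (hvu.trans huw)⟩

variable (Γ)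

/-- The components counted by `bc`; by `GoodCompAt.of_conn` any representative may be tested. -/
abbrev GoodComp : Type := {q : Quot Γ.Adj // Γ.GoodCompAt q.out}

lemma bc_eq_card_goodComp : Γ.bc = Nat.card Γ.GoodComp := by
  rw [bc, ← Nat.card_coe_set_eq]
  congr 2
  ext q
  constructor
  · rintro ⟨v, rfl, hv⟩
    exact hv.of_conn (conn_iff_quot_mk_eq.mpr (Quot.out_eq _).symm)
  · exact fun hq => ⟨q.out, (Quot.out_eq q).symm, hq⟩

end Components

section Kernel

variable {Γ} {x : V → ℤ}

lemma add_eq_zero_of_mulVec_B_eq_zero (hx : Γ.B *ᵥ x = 0) {e : E} {a b : V} (hab : a ≠ b)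
    (ha : Γ.Incid e a) (hb : Γ.Incid e b) : x a + x b = 0 := by
  rw [← Γ.mulVec_B_apply_of_incid_ne hab ha hb, hx, Pi.zero_apply]

lemma eq_zero_of_mulVec_B_eq_zero (hx : Γ.B *ᵥ x = 0) {e : E} {a : V} (he : ¬ Γ.IsOrd e)
    (ha : Γ.Incid e a) : x a = 0 := by
  have h : (Γ.μ e a : ℤ) * x a = 0 := by
    rw [← Γ.mulVec_B_apply_of_not_isOrd he ha, hx, Pi.zero_apply]
  exact (mul_eq_zero.mp h).resolve_left (Int.natCast_ne_zero.mpr ha)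

lemma eq_or_eq_neg_of_conn (hx : Γ.B *ᵥ x = 0) {v w : V} (h : Γ.Conn v w) :
    x w = x v ∨ x w = -x v := by
  induction h with
  | refl => exact Or.inl rfl
  | @tail a b _ hab ih =>
    obtain ⟨e, ha, hb⟩ := hab
    by_cases hba : a = b
    · exact hba ▸ ih
    · have := add_eq_zero_of_mulVec_B_eq_zero hx hba ha hb
      omega

lemma goodCompAt_of_mulVec_B_eq_zero (hx : Γ.B *ᵥ x = 0) {w : V} (hw : x w ≠ 0) :
    Γ.GoodCompAt w := by
  have hne : ∀ u, Γ.Conn w u → x u ≠ 0 := fun u hwu => by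
    rcases eq_or_eq_neg_of_conn hx hwu with h | h <;> omega
  refine ⟨fun e u hwu hu => ?_, fun u => decide (0 < x u), fun e u u' hwu hu hu' huu' => ?_⟩
  · by_contra he
    exact hne u hwu (eq_zero_of_mulVec_B_eq_zero hx he hu)
  · have := add_eq_zero_of_mulVec_B_eq_zero hx huu' hu hu'
    have := hne u hwu
    simp only [ne_eq, decide_eq_decide]
    omega

lemma exists_mulVec_B_eq_zero_of_goodCompAt {v : V} (hv : Γ.GoodCompAt v) :
    ∃ x : V → ℤ, Γ.B *ᵥ x = 0 ∧ x v = 1 ∧ ∀ w, ¬ Γ.Conn v w → x w = 0 := by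
  classical
  obtain ⟨hedges, c, hc⟩ := hv
  refine ⟨fun w => if Γ.Conn v w then (if c w = c v then 1 else -1) else 0, ?_,
    by dsimp only; rw [if_pos .refl, if_pos rfl], fun w hw => if_neg hw⟩
  funext e
  by_cases hcomp : ∃ a, Γ.Conn v a ∧ Γ.Incid e a
  · obtain ⟨a₀, hva₀, ha₀⟩ := hcomp
    obtain ⟨a, b, hab, ha, hb⟩ := (Γ.isOrd_iff).mp (hedges e a₀ hva₀ ha₀)
    have hva := hva₀.of_incid ha₀ ha
    have hvb := hva₀.of_incid ha₀ hb
    have hcol := hc e a b hva ha hb hab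
    rw [Γ.mulVec_B_apply_of_incid_ne hab ha hb, if_pos hva, if_pos hvb, Pi.zero_apply]
    revert hcol
    cases c a <;> cases c b <;> cases c v <;> simp
  · push Not at hcomp
    rw [mulVec_B_apply, Pi.zero_apply]
    refine Finset.sum_eq_zero fun w _ => ?_
    by_cases hvw : Γ.Conn v w
    · rw [show Γ.μ e w = 0 from not_not.mp (hcomp w hvw)]
      simp
    · simp [hvw]

end Kernel

section KernelEquiv

lemma mem_ker_mulVecLin_B {x : V → ℤ} :
    x ∈ LinearMap.ker Γ.B.mulVecLin ↔ Γ.B *ᵥ x = 0 := by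
  rw [LinearMap.mem_ker, Matrix.mulVecLin_apply]

noncomputable def evalGoodComp : LinearMap.ker Γ.B.mulVecLin →ₗ[ℤ] (Γ.GoodComp → ℤ) :=
  LinearMap.funLeft ℤ ℤ (fun q : Γ.GoodComp => q.1.out) ∘ₗ (LinearMap.ker Γ.B.mulVecLin).subtype

lemma evalGoodComp_injective : Function.Injective Γ.evalGoodComp := by
  refine (injective_iff_map_eq_zero _).mpr fun ⟨x, hx⟩ h0 => ?_
  rw [mem_ker_mulVecLin_B] at hx
  refine Subtype.ext (funext fun w => by_contra fun hw => ?_)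
  have hgood := goodCompAt_of_mulVec_B_eq_zero hx hw
  have hw_out : Γ.Conn w (Quot.mk Γ.Adj w).out :=
    conn_iff_quot_mk_eq.mpr (Quot.out_eq _).symm
  have hzero : x (Quot.mk Γ.Adj w).out = 0 :=
    congrFun h0 ⟨Quot.mk Γ.Adj w, hgood.of_conn hw_out⟩
  rcases eq_or_eq_neg_of_conn hx hw_out with h | h <;> simp_all

lemma evalGoodComp_surjective : Function.Surjective Γ.evalGoodComp := by
  classical
  have := Fintype.ofFinite Γ.GoodComp
  choose ind hind_ker hind_out hind_zero using
    fun q : Γ.GoodComp => exists_mulVec_B_eq_zero_of_goodCompAt q.2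
  intro y
  have hmem : ∑ q, y q • ind q ∈ LinearMap.ker Γ.B.mulVecLin :=
    Submodule.sum_mem _ fun q _ =>
      Submodule.smul_mem _ _ ((Γ.mem_ker_mulVecLin_B).mpr (hind_ker q))
  refine ⟨⟨_, hmem⟩, funext fun q' => ?_⟩
  simp only [evalGoodComp, LinearMap.coe_comp, Function.comp_apply, Submodule.coe_subtype,
    LinearMap.funLeft_apply, Finset.sum_apply, Pi.smul_apply, smul_eq_mul]
  rw [Finset.sum_eq_single q' (fun q _ hq => ?_) (by simp), hind_out, mul_one]
  refine mul_eq_zero_of_right _ (hind_zero q _ fun hconn => hq (Subtype.ext ?_))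
  simpa only [Quot.out_eq] using conn_iff_quot_mk_eq.mp hconn

noncomputable def kerEquivGoodComp :
    LinearMap.ker Γ.B.mulVecLin ≃ₗ[ℤ] (Γ.GoodComp → ℤ) :=
  LinearEquiv.ofBijective Γ.evalGoodComp ⟨Γ.evalGoodComp_injective, Γ.evalGoodComp_surjective⟩

end KernelEquiv

end TruncGraph

theorem stmt10_general {V E : Type} [Fintype V]
    (Γ : TruncGraph V E) :
    Nonempty (LinearMap.ker (Matrix.mulVecLin Γ.B) ≃ₗ[ℤ] (Fin Γ.bc → ℤ)) ∧
      Γ.B.rank = Fintype.card V - Γ.bc := by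
  let e : LinearMap.ker (Matrix.mulVecLin Γ.B) ≃ₗ[ℤ] (Fin Γ.bc → ℤ) :=
    Γ.kerEquivGoodComp.trans <| LinearEquiv.funCongrLeft ℤ ℤ <|
      (Finite.equivFinOfCardEq Γ.bc_eq_card_goodComp.symm).symm
  exact ⟨⟨e⟩, Matrix.rank_eq_card_sub_of_ker_equiv e⟩

/-- for a truncated graph `Γ` with incidence matrix `B_Γ`, the kernel of
the `ℤ`-linear map `ℤ^V → ℤ^E`, `x ↦ B_Γ x`, is free of rank `bc(Γ)`, the number of
connected components of `Γ` which are bipartite without truncated edges.  In particular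
the rank of `B_Γ` is `|V| − bc(Γ)`. -/
theorem stmt10 {V E : Type} [Fintype V] [Fintype E] [DecidableEq V] [DecidableEq E]
    (Γ : TruncGraph V E) :
    Nonempty (LinearMap.ker (Matrix.mulVecLin Γ.B) ≃ₗ[ℤ] (Fin Γ.bc → ℤ)) ∧
      Γ.B.rank = Fintype.card V - Γ.bc :=
  stmt10_general Γ
end
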